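/- arXiv:1311.5610 — 2 statements merged into one kernel-verified Lean document; each statement's English description precedes it below -/
import Mathlib

section
/- Pathwise, the diffusion-scaled flow vector satisfies D̂^n(t) = (I_{K²} + P_c(I−P')^{-1}B) Φ̃^n(t) + P_c(I−P')^{-1} Â^n(t) − P_c(I−P')^{-1} Q̂^n(t); in particular, D̂^n does not depend on the service-process fluctuation S̃^n except through the queue term Q̂^n. -/
/-!
Solving the balance equation for `T̂` gives `μ ⊙ T̂ = (I − P')⁻¹(Â + BΦ̃ − Q̂) − S̃`, because
`(I − P')⁻¹` undoes the `(I − P')S̃` term. Hence `S̃ᵢ + μᵢ T̂ᵢ` is free of `S̃`, and substituting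
it into `D̂ᵢⱼ = Φ̃ᵢⱼ + pᵢⱼ(S̃ᵢ + μᵢ T̂ᵢ)` gives the representation.
-/

open Matrix

variable {n R : Type*} [Fintype n] [DecidableEq n]

theorem Matrix.diagonal_mul_mulVec [CommSemiring R] (d : n → R) (N : Matrix n n R) (v : n → R) :
    (diagonal d * N) *ᵥ v = d * (N *ᵥ v) := by
  ext k
  rw [← mulVec_mulVec, mulVec_diagonal, Pi.mul_apply]

theorem Matrix.nonsing_inv_mulVec_sub_mulVec [CommRing R] {A : Matrix n n R} (hA : IsUnit A)
    (v s : n → R) : A⁻¹ *ᵥ (v - A *ᵥ s) = A⁻¹ *ᵥ v - s := by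
  rw [mulVec_sub, mulVec_mulVec, nonsing_inv_mul A ((isUnit_iff_isUnit_det A).mp hA),
    one_mulVec]

theorem add_mul_eq_inv_mulVec_of_eq_diagonal_inv_mul [Field R] {A : Matrix n n R}
    (hA : IsUnit A) {μ : n → R} (hμ : ∀ k, μ k ≠ 0) {u s t q : n → R}
    (ht : t = (diagonal μ⁻¹ * A⁻¹) *ᵥ (u - A *ᵥ s) - (diagonal μ⁻¹ * A⁻¹) *ᵥ q) :
    s + μ * t = A⁻¹ *ᵥ (u - q) := by
  have hμt : μ * t = A⁻¹ *ᵥ (u - q) - s := by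
    rw [ht, diagonal_mul_mulVec, diagonal_mul_mulVec, ← mul_sub, ← mul_assoc,
      nonsing_inv_mulVec_sub_mulVec hA, ← sub_right_comm, ← mulVec_sub]
    ext k
    simp [hμ k]
  rw [hμt, add_sub_cancel]

/-- Lemma 3 of the paper (pathwise algebraic identity): combining the decomposition
`D̂_{i,j} = Φ̃_{i,j} + p_{i,j}(S̃ᵢ + μᵢ T̂ᵢ)` with the representation of `T̂` from the
balance equation, the service fluctuations `S̃` cancel and
`D̂ = (I + P_c(I−P')⁻¹B)Φ̃ + P_c(I−P')⁻¹Â − P_c(I−P')⁻¹Q̂`, i.e. componentwise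
`D̂_{i,j} = Φ̃_{i,j} + p_{i,j}·[(I−P')⁻¹(Â + BΦ̃ − Q̂)]ᵢ`. -/
theorem diffusion_scaled_flow_representation
    (K : ℕ) (P : Matrix (Fin K) (Fin K) ℝ)
    (hinv : IsUnit (1 - Pᵀ))
    (μser : Fin K → ℝ) (hμ : ∀ k, μser k ≠ 0)
    (Ahat Stilde That Qhat : Fin K → ℝ) (Φtilde Dhat : Fin K → Fin K → ℝ)
    (hT : That = fun k =>
      ((Matrix.diagonal fun l => (μser l)⁻¹) * (1 - Pᵀ)⁻¹).mulVec
          (fun l => Ahat l + (∑ m, Φtilde m l) - (1 - Pᵀ).mulVec Stilde l) k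
        - ((Matrix.diagonal fun l => (μser l)⁻¹) * (1 - Pᵀ)⁻¹).mulVec Qhat k)
    (hD : ∀ i j, Dhat i j = Φtilde i j + P i j * (Stilde i + μser i * That i)) :
    ∀ i j, Dhat i j =
      Φtilde i j +
        P i j * ((1 - Pᵀ)⁻¹.mulVec
          (fun l => Ahat l + (∑ m, Φtilde m l) - Qhat l) i) := by
  intro i j
  have hcancel := add_mul_eq_inv_mulVec_of_eq_diagonal_inv_mul hinv hμ hT
  rw [hD]
  exact congrArg (Φtilde i j + P i j * ·) (congrFun hcancel i)
end

section
/- For the two-way Bernoulli split of a renewal-type counting process: if A(t) is a counting process with rate α and asymptotic variance parameter v² = lim Var(A(t))/t, and each arrival is independently routed to stream 1 with probability q and stream 2 with probability 1−q, then the asymptotic covariance of the two output streams is lim_{t→∞} Cov(D_1(t), D_2(t))/t = q(1−q)(v² − α), so the asymptotic correlation has the sign of v² − α. -/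
/-!
Conditionally on `A(t) = n`, the marks `B₀, …, B_{n-1}` are still i.i.d. Bernoulli(q), so
`E[D₁ | A(t) = n] = q n` and `E[D₁ D₂ | A(t) = n] = E[S (n - S)] = n² q - (n q(1-q) + n² q²)
= q(1-q)(n² - n)` for `S ~ Binomial(n, q)`. Averaging over `A(t)` gives, for every `t`, the exact
identity `Cov(D₁(t), D₂(t)) = q(1-q)(Var A(t) - E A(t))`; dividing by `t` and letting `t → ∞`
gives the limit.
-/

open MeasureTheory ProbabilityTheory Filter Finset

theorem ProbabilityTheory.IndepFun.integral_comp_eq_integral_integral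
    {Ω β γ : Type*} [MeasurableSpace Ω] {μ : Measure Ω} [IsFiniteMeasure μ]
    [MeasurableSpace β] [MeasurableSpace γ] {X : Ω → β} {Y : Ω → γ}
    (hXY : IndepFun X Y μ) (hX : Measurable X) (hY : Measurable Y)
    {f : β × γ → ℝ} (hf : Measurable f) (hint : Integrable (fun ω => f (X ω, Y ω)) μ) :
    ∫ ω, f (X ω, Y ω) ∂μ = ∫ ω, ∫ ω', f (X ω', Y ω) ∂μ ∂μ := by
  have hprod := (indepFun_iff_map_prod_eq_prod_map_map hX.aemeasurable hY.aemeasurable).1 hXY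
  have hXYm : Measurable fun ω => (X ω, Y ω) := hX.prodMk hY
  have hint' : Integrable f ((μ.map X).prod (μ.map Y)) := by
    rw [← hprod, integrable_map_measure hf.aestronglyMeasurable hXYm.aemeasurable]
    exact hint
  calc ∫ ω, f (X ω, Y ω) ∂μ = ∫ z, f z ∂(μ.map X).prod (μ.map Y) := by
        rw [← hprod, integral_map hXYm.aemeasurable hf.aestronglyMeasurable]
    _ = ∫ y, ∫ x, f (x, y) ∂μ.map X ∂μ.map Y := integral_prod_symm f hint'
    _ = ∫ ω, ∫ ω', f (X ω', Y ω) ∂μ ∂μ := by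
        rw [integral_map hY.aemeasurable
          (hf.stronglyMeasurable.integral_prod_left' (μ := μ.map X)).aestronglyMeasurable]
        congr 1 with ω
        exact integral_map hX.aemeasurable
          (hf.comp (measurable_id.prodMk measurable_const)).aestronglyMeasurable

section

variable {Ω : Type*} [MeasurableSpace Ω] {μ : Measure Ω}

theorem integral_eq_measureReal_of_ae_eq_zero_or_one {X : Ω → ℝ} (hX : Measurable X)
    (h01 : ∀ᵐ ω ∂μ, X ω = 0 ∨ X ω = 1) : ∫ ω, X ω ∂μ = μ.real {ω | X ω = 1} := by
  have hXind : X =ᵐ[μ] Set.indicator {ω | X ω = 1} 1 := by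
    filter_upwards [h01] with ω hω
    rcases hω with h | h <;> simp [Set.indicator, h]
  rw [integral_congr_ae hXind]
  exact integral_indicator_one (hX (measurableSet_singleton 1))

theorem memLp_two_of_ae_eq_zero_or_one [IsFiniteMeasure μ] {X : Ω → ℝ} (hX : Measurable X)
    (h01 : ∀ᵐ ω ∂μ, X ω = 0 ∨ X ω = 1) : MemLp X 2 μ :=
  MemLp.of_bound hX.aestronglyMeasurable 1 <| h01.mono fun _ h => by
    rcases h with h | h <;> simp [h]

theorem variance_of_ae_eq_zero_or_one [IsProbabilityMeasure μ] {X : Ω → ℝ} (hX : Measurable X)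
    (h01 : ∀ᵐ ω ∂μ, X ω = 0 ∨ X ω = 1) : variance X μ = μ[X] * (1 - μ[X]) := by
  have hsq : μ[X ^ 2] = μ[X] := integral_congr_ae <| h01.mono fun ω h => by
    rcases h with h | h <;> simp [h]
  rw [variance_eq_sub (memLp_two_of_ae_eq_zero_or_one hX h01), hsq]
  ring

theorem integral_sum_range {B : ℕ → Ω → ℝ} {m : ℝ} (hB : ∀ ℓ, Integrable (B ℓ) μ)
    (hm : ∀ ℓ, μ[B ℓ] = m) (n : ℕ) : ∫ ω, ∑ ℓ ∈ range n, B ℓ ω ∂μ = n * m := by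
  simp [integral_finsetSum _ fun ℓ _ => hB ℓ, hm]

theorem variance_sum_range {B : ℕ → Ω → ℝ} {s : ℝ} (hB : ∀ ℓ, MemLp (B ℓ) 2 μ)
    (hind : Pairwise fun i j => IndepFun (B i) (B j) μ) (hs : ∀ ℓ, variance (B ℓ) μ = s)
    (n : ℕ) : variance (fun ω => ∑ ℓ ∈ range n, B ℓ ω) μ = n * s := by
  rw [← Finset.sum_fn, IndepFun.variance_sum (fun ℓ _ => hB ℓ) fun i _ j _ hij => hind hij]
  simp [hs]

theorem integral_sum_range_mul_sub_sum_range [IsProbabilityMeasure μ] {B : ℕ → Ω → ℝ} {q : ℝ}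
    (hB : ∀ ℓ, Measurable (B ℓ)) (h01 : ∀ ℓ, ∀ᵐ ω ∂μ, B ℓ ω = 0 ∨ B ℓ ω = 1)
    (hq : ∀ ℓ, μ[B ℓ] = q) (hind : Pairwise fun i j => IndepFun (B i) (B j) μ) (n : ℕ) :
    ∫ ω, (∑ ℓ ∈ range n, B ℓ ω) * (n - ∑ ℓ ∈ range n, B ℓ ω) ∂μ
      = q * (1 - q) * (n ^ 2 - n) := by
  have hB2 ℓ := memLp_two_of_ae_eq_zero_or_one (hB ℓ) (h01 ℓ)
  set S := fun ω => ∑ ℓ ∈ range n, B ℓ ω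
  have hS2 : MemLp S 2 μ := memLp_finsetSum _ fun ℓ _ => hB2 ℓ
  have hmean : μ[S] = n * q := integral_sum_range (fun ℓ => (hB2 ℓ).integrable one_le_two) hq n
  have hvar : variance S μ = n * (q * (1 - q)) := variance_sum_range hB2 hind
    (fun ℓ => by rw [variance_of_ae_eq_zero_or_one (hB ℓ) (h01 ℓ), hq ℓ]) n
  rw [variance_eq_sub hS2, hmean] at hvar
  simp only [Pi.pow_apply] at hvar
  calc ∫ ω, S ω * (n - S ω) ∂μ = ∫ ω, (n * S ω - S ω ^ 2) ∂μ := by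
        congr 1 with ω
        ring
    _ = q * (1 - q) * (n ^ 2 - n) := by
        rw [integral_sub ((hS2.integrable one_le_two).const_mul _) hS2.integrable_sq,
          integral_const_mul, hmean]
        linarith

theorem sum_range_mem_Icc_of_eq_zero_or_one {x : ℕ → ℝ} (hx : ∀ ℓ, x ℓ = 0 ∨ x ℓ = 1) (n : ℕ) :
    ∑ ℓ ∈ range n, x ℓ ∈ Set.Icc 0 (n : ℝ) := by
  have hx01 ℓ : x ℓ ∈ Set.Icc (0 : ℝ) 1 := by rcases hx ℓ with h | h <;> simp [h]
  constructor
  · exact sum_nonneg fun ℓ _ => (hx01 ℓ).1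
  · simpa using sum_le_sum fun ℓ (_ : ℓ ∈ range n) => (hx01 ℓ).2

theorem integral_comp_sum_range_eq_integral_integral [IsFiniteMeasure μ]
    {N : Ω → ℕ} {B : ℕ → Ω → ℝ} (hN : Measurable N) (hB : ∀ ℓ, Measurable (B ℓ))
    (hBN : IndepFun (fun ω ℓ => B ℓ ω) N μ)
    {g : ℕ → ℝ → ℝ} (hg : ∀ n, Measurable (g n))
    (hint : Integrable (fun ω => g (N ω) (∑ ℓ ∈ range (N ω), B ℓ ω)) μ) :
    ∫ ω, g (N ω) (∑ ℓ ∈ range (N ω), B ℓ ω) ∂μ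
      = ∫ ω, ∫ ω', g (N ω) (∑ ℓ ∈ range (N ω), B ℓ ω') ∂μ ∂μ :=
  hBN.integral_comp_eq_integral_integral (measurable_pi_lambda _ hB) hN
    (f := fun p => g p.2 (∑ ℓ ∈ range p.2, p.1 ℓ))
    (measurable_from_prod_countable_left fun n =>
      (hg n).comp (Finset.measurable_sum (range n) fun ℓ _ => measurable_pi_apply ℓ)) hint

theorem measurable_sum_range_comp {N : Ω → ℕ} {B : ℕ → Ω → ℝ} (hN : Measurable N)
    (hB : ∀ ℓ, Measurable (B ℓ)) : Measurable fun ω => ∑ ℓ ∈ range (N ω), B ℓ ω :=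
  (measurable_from_prod_countable_left (f := fun p : Ω × ℕ => ∑ ℓ ∈ range p.2, B ℓ p.1)
    fun n => Finset.measurable_sum (range n) fun ℓ _ => hB ℓ).comp (measurable_id.prodMk hN)

theorem ae_sum_range_comp_mem_Icc {N : Ω → ℕ} {B : ℕ → Ω → ℝ}
    (h01 : ∀ ℓ, ∀ᵐ ω ∂μ, B ℓ ω = 0 ∨ B ℓ ω = 1) :
    ∀ᵐ ω ∂μ, ∑ ℓ ∈ range (N ω), B ℓ ω ∈ Set.Icc 0 (N ω : ℝ) :=
  (ae_all_iff.2 h01).mono fun _ hω => sum_range_mem_Icc_of_eq_zero_or_one hω _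

theorem integrable_sum_range_comp {N : Ω → ℕ} {B : ℕ → Ω → ℝ} (hN : Measurable N)
    (hB : ∀ ℓ, Measurable (B ℓ)) (h01 : ∀ ℓ, ∀ᵐ ω ∂μ, B ℓ ω = 0 ∨ B ℓ ω = 1)
    (hNint : Integrable (fun ω => (N ω : ℝ)) μ) :
    Integrable (fun ω => ∑ ℓ ∈ range (N ω), B ℓ ω) μ :=
  hNint.mono' (measurable_sum_range_comp hN hB).aestronglyMeasurable <|
    (ae_sum_range_comp_mem_Icc h01).mono fun ω h => by
      rw [Real.norm_of_nonneg h.1]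
      exact h.2

theorem integral_sum_range_comp [IsFiniteMeasure μ] {N : Ω → ℕ} {B : ℕ → Ω → ℝ} {q : ℝ}
    (hN : Measurable N) (hB : ∀ ℓ, Measurable (B ℓ)) (h01 : ∀ ℓ, ∀ᵐ ω ∂μ, B ℓ ω = 0 ∨ B ℓ ω = 1)
    (hq : ∀ ℓ, μ[B ℓ] = q) (hBN : IndepFun (fun ω ℓ => B ℓ ω) N μ)
    (hNint : Integrable (fun ω => (N ω : ℝ)) μ) :
    ∫ ω, ∑ ℓ ∈ range (N ω), B ℓ ω ∂μ = q * ∫ ω, (N ω : ℝ) ∂μ := by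
  have hBint ℓ :=
    (memLp_two_of_ae_eq_zero_or_one (μ := μ) (hB ℓ) (h01 ℓ)).integrable one_le_two
  rw [integral_comp_sum_range_eq_integral_integral hN hB hBN (g := fun _ s => s)
    (fun _ => measurable_id) (integrable_sum_range_comp hN hB h01 hNint)]
  simp only [integral_sum_range hBint hq, integral_mul_const]
  ring

theorem integral_sum_range_comp_mul_sub [IsProbabilityMeasure μ] {N : Ω → ℕ} {B : ℕ → Ω → ℝ}
    {q : ℝ} (hN : Measurable N) (hB : ∀ ℓ, Measurable (B ℓ))
    (h01 : ∀ ℓ, ∀ᵐ ω ∂μ, B ℓ ω = 0 ∨ B ℓ ω = 1)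
    (hq : ∀ ℓ, μ[B ℓ] = q) (hind : Pairwise fun i j => IndepFun (B i) (B j) μ)
    (hBN : IndepFun (fun ω ℓ => B ℓ ω) N μ) (hN2 : MemLp (fun ω => (N ω : ℝ)) 2 μ) :
    ∫ ω, (∑ ℓ ∈ range (N ω), B ℓ ω) * (N ω - ∑ ℓ ∈ range (N ω), B ℓ ω) ∂μ
      = q * (1 - q) * (∫ ω, (N ω : ℝ) ^ 2 ∂μ - ∫ ω, (N ω : ℝ) ∂μ) := by
  have hS := measurable_sum_range_comp hN hB
  have hint : Integrable
      (fun ω => (∑ ℓ ∈ range (N ω), B ℓ ω) * (N ω - ∑ ℓ ∈ range (N ω), B ℓ ω)) μ :=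
    hN2.integrable_sq.mono'
      (hS.mul ((measurable_from_top.comp hN).sub hS)).aestronglyMeasurable <|
      (ae_sum_range_comp_mem_Icc h01).mono fun ω h => by
        rw [Real.norm_of_nonneg (mul_nonneg h.1 (sub_nonneg.2 h.2)), sq]
        exact mul_le_mul h.2 (sub_le_self _ h.1) (sub_nonneg.2 h.2) (Nat.cast_nonneg _)
  rw [integral_comp_sum_range_eq_integral_integral hN hB hBN (g := fun n s => s * (n - s))
    (fun _ => measurable_id.mul (measurable_const.sub measurable_id)) hint]
  simp only [integral_sum_range_mul_sub_sum_range hB h01 hq hind, integral_const_mul]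
  rw [integral_sub hN2.integrable_sq (hN2.integrable one_le_two)]

theorem covariance_sum_range_comp [IsProbabilityMeasure μ] {N : Ω → ℕ} {B : ℕ → Ω → ℝ}
    {q : ℝ} (hN : Measurable N) (hB : ∀ ℓ, Measurable (B ℓ))
    (h01 : ∀ ℓ, ∀ᵐ ω ∂μ, B ℓ ω = 0 ∨ B ℓ ω = 1)
    (hq : ∀ ℓ, μ[B ℓ] = q) (hind : Pairwise fun i j => IndepFun (B i) (B j) μ)
    (hBN : IndepFun (fun ω ℓ => B ℓ ω) N μ) (hN2 : MemLp (fun ω => (N ω : ℝ)) 2 μ) :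
    (∫ ω, (∑ ℓ ∈ range (N ω), B ℓ ω) * (N ω - ∑ ℓ ∈ range (N ω), B ℓ ω) ∂μ)
        - (∫ ω, ∑ ℓ ∈ range (N ω), B ℓ ω ∂μ) * (∫ ω, (N ω : ℝ) - ∑ ℓ ∈ range (N ω), B ℓ ω ∂μ)
      = q * (1 - q) * (variance (fun ω => (N ω : ℝ)) μ - ∫ ω, (N ω : ℝ) ∂μ) := by
  have hNint := hN2.integrable one_le_two
  rw [integral_sub hNint (integrable_sum_range_comp hN hB h01 hNint),
    integral_sum_range_comp_mul_sub hN hB h01 hq hind hBN hN2,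
    integral_sum_range_comp hN hB h01 hq hBN hNint, variance_eq_sub hN2]
  simp only [Pi.pow_apply]
  ring

end

theorem bernoulli_split_asymptotic_covariance_general
    {Ω : Type*} [MeasurableSpace Ω] (μ : Measure Ω) [IsProbabilityMeasure μ]
    (A : ℝ → Ω → ℕ) (hAmeas : ∀ t, Measurable (A t))
    (B : ℕ → Ω → ℝ) (hBmeas : ∀ ℓ, Measurable (B ℓ))
    (q : ℝ) (hq0 : 0 ≤ q)
    (hB01 : ∀ ℓ, ∀ᵐ ω ∂μ, B ℓ ω = 0 ∨ B ℓ ω = 1)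
    (hBq : ∀ ℓ, μ {ω | B ℓ ω = 1} = ENNReal.ofReal q)
    (hBiid : iIndepFun B μ)
    (hindep : IndepFun (fun ω => fun ℓ : ℕ => B ℓ ω) (fun ω => fun t : ℝ => A t ω) μ)
    (α v2 : ℝ)
    (hA2 : ∀ t, MemLp (fun ω => (A t ω : ℝ)) 2 μ)
    (hmean : Tendsto (fun t : ℝ => (∫ ω, (A t ω : ℝ) ∂μ) / t) atTop (nhds α))
    (hvar : Tendsto (fun t : ℝ => variance (fun ω => (A t ω : ℝ)) μ / t) atTop (nhds v2)) :
    Tendsto (fun t : ℝ =>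
        ((∫ ω, (∑ ℓ ∈ Finset.range (A t ω), B ℓ ω)
              * ((A t ω : ℝ) - ∑ ℓ ∈ Finset.range (A t ω), B ℓ ω) ∂μ)
          - (∫ ω, ∑ ℓ ∈ Finset.range (A t ω), B ℓ ω ∂μ)
            * (∫ ω, (A t ω : ℝ) - ∑ ℓ ∈ Finset.range (A t ω), B ℓ ω ∂μ)) / t)
      atTop (nhds (q * (1 - q) * (v2 - α))) := by
  have hq ℓ : μ[B ℓ] = q := by
    rw [integral_eq_measureReal_of_ae_eq_zero_or_one (hBmeas ℓ) (hB01 ℓ), measureReal_def, hBq ℓ,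
      ENNReal.toReal_ofReal hq0]
  have hcov t := covariance_sum_range_comp (hAmeas t) hBmeas hB01 hq
    (fun _ _ hij => hBiid.indepFun hij) (hindep.comp measurable_id (measurable_pi_apply t)) (hA2 t)
  simp_rw [hcov, mul_div_assoc, sub_div]
  exact (hvar.sub hmean).const_mul _

/-- Asymptotic covariance of a Bernoulli split of a counting process: if `A(t)` has
rate `α` and asymptotic variance parameter `v²`, and each arrival is routed
independently to stream 1 with probability `q` (stream 2 otherwise), then
`Cov(D₁(t), D₂(t))/t → q(1−q)(v² − α)`. -/
theorem bernoulli_split_asymptotic_covariance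
    {Ω : Type*} [MeasurableSpace Ω] (μ : Measure Ω) [IsProbabilityMeasure μ]
    (A : ℝ → Ω → ℕ) (hAmeas : ∀ t, Measurable (A t))
    (B : ℕ → Ω → ℝ) (hBmeas : ∀ ℓ, Measurable (B ℓ))
    (q : ℝ) (hq0 : 0 ≤ q) (hq1 : q ≤ 1)
    (hB01 : ∀ ℓ, ∀ᵐ ω ∂μ, B ℓ ω = 0 ∨ B ℓ ω = 1)
    (hBq : ∀ ℓ, μ {ω | B ℓ ω = 1} = ENNReal.ofReal q)
    (hBiid : iIndepFun B μ)
    (hindep : IndepFun (fun ω => fun ℓ : ℕ => B ℓ ω) (fun ω => fun t : ℝ => A t ω) μ)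
    (α v2 : ℝ)
    (hA2 : ∀ t, MemLp (fun ω => (A t ω : ℝ)) 2 μ)
    (hmean : Tendsto (fun t : ℝ => (∫ ω, (A t ω : ℝ) ∂μ) / t) atTop (nhds α))
    (hvar : Tendsto (fun t : ℝ => variance (fun ω => (A t ω : ℝ)) μ / t) atTop (nhds v2)) :
    Tendsto (fun t : ℝ =>
        ((∫ ω, (∑ ℓ ∈ Finset.range (A t ω), B ℓ ω)
              * ((A t ω : ℝ) - ∑ ℓ ∈ Finset.range (A t ω), B ℓ ω) ∂μ)
          - (∫ ω, ∑ ℓ ∈ Finset.range (A t ω), B ℓ ω ∂μ)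
            * (∫ ω, (A t ω : ℝ) - ∑ ℓ ∈ Finset.range (A t ω), B ℓ ω ∂μ)) / t)
      atTop (nhds (q * (1 - q) * (v2 - α))) :=
  bernoulli_split_asymptotic_covariance_general μ A hAmeas B hBmeas q hq0 hB01 hBq hBiid hindep α v2
    hA2 hmean hvar
end
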